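/- A connected graph X of infinite diameter satisfies the uniform local finiteness property if and only if X is uniformly locally finite (i.e., there exists P such that every vertex has valency at most P). -/

import Mathlib

open SimpleGraph Finset

lemma ball_bound {α : Type*} (G : SimpleGraph α) (hconn : G.Connected) (P : ℕ)
    (hP : ∀ v : α, (G.neighborSet v).Finite ∧ (G.neighborSet v).ncard ≤ P)
    (v : α) : ∀ n : ℕ, ∃ B : Finset α,
      (∀ u, G.dist v u ≤ n → u ∈ B) ∧ B.card ≤ (P + 1) ^ n := by
  intro n
  induction n with
  | zero =>
    refine ⟨{v}, fun u hu => ?_, by simp⟩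
    rw [Nat.le_zero] at hu
    simp [((hconn v u).dist_eq_zero_iff.mp hu).symm]
  | succ n ih =>
    obtain ⟨B, hB, hBc⟩ := ih
    classical
    refine ⟨B ∪ B.biUnion (fun u => (hP u).1.toFinset), fun w hw => ?_, ?_⟩
    · rcases le_or_gt (G.dist v w) n with h | h
      · exact Finset.mem_union_left _ (hB w h)
      · have hd : G.dist v w = n + 1 := le_antisymm hw h
        obtain ⟨p, hp⟩ := (hconn w v).exists_walk_length_eq_dist
        rw [SimpleGraph.dist_comm, hd] at hp
        cases p with
        | nil => simp at hp
        | cons hadj q =>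
          rename_i u
          simp only [SimpleGraph.Walk.length_cons, Nat.add_right_cancel_iff] at hp
          refine Finset.mem_union_right _ (Finset.mem_biUnion.mpr ⟨u, hB u ?_, ?_⟩)
          · calc G.dist v u ≤ q.reverse.length := SimpleGraph.dist_le _
              _ = n := by simp [hp]
          · simp [hadj.symm]
    · calc (B ∪ B.biUnion (fun u => (hP u).1.toFinset)).card
          ≤ B.card + (B.biUnion (fun u => (hP u).1.toFinset)).card :=
            Finset.card_union_le _ _
        _ ≤ B.card + ∑ u ∈ B, ((hP u).1.toFinset).card := by
            gcongr; exact Finset.card_biUnion_le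
        _ ≤ B.card + ∑ u ∈ B, P := by
            gcongr with u hu
            have := (hP u).2
            rwa [Set.ncard_eq_toFinset_card _ (hP u).1] at this
        _ = B.card * (P + 1) := by rw [Finset.sum_const, smul_eq_mul]; ring
        _ ≤ (P + 1) ^ n * (P + 1) := by gcongr
        _ = (P + 1) ^ (n + 1) := by ring

/-- A connected graph of infinite diameter satisfies the uniform local
finiteness property (for all `l > 0`, `k > 1` there is `N(l,k)` such that any vertex
set with more than `N(l,k)` elements contains `k` vertices pairwise more than `l`
apart) if and only if it is uniformly locally finite (all valencies bounded by some
`P`). -/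
theorem ulfp_iff_uniformly_locally_finite {α : Type*} (G : SimpleGraph α)
    (hconn : G.Connected) (hdiam : ∀ n : ℕ, ∃ u v : α, n < G.dist u v) :
    (∃ N : ℕ → ℕ → ℕ, ∀ l k : ℕ, 0 < l → 1 < k → ∀ A : Finset α,
        N l k < A.card → ∃ A' ⊆ A, A'.card = k ∧
          ∀ y ∈ A', ∀ z ∈ A', y ≠ z → l < G.dist y z) ↔
    (∃ P : ℕ, ∀ v : α, (G.neighborSet v).Finite ∧ (G.neighborSet v).ncard ≤ P) := by
  classical
  constructor
  · rintro ⟨N, hN⟩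
    refine ⟨N 2 2, fun v => ?_⟩
    have key : ∀ A : Finset α, (↑A : Set α) ⊆ G.neighborSet v → A.card ≤ N 2 2 := by
      intro A hA
      by_contra h
      push_neg at h
      obtain ⟨A', hA'sub, hA'card, hA'dist⟩ := hN 2 2 (by norm_num) (by norm_num) A h
      obtain ⟨y, z, hyz, hA'eq⟩ := Finset.card_eq_two.mp hA'card
      have hy : G.Adj v y := hA (hA'sub (by simp [hA'eq]))
      have hz : G.Adj v z := hA (hA'sub (by simp [hA'eq]))
      have h2 : (2 : ℕ) < G.dist y z :=
        hA'dist y (by simp [hA'eq]) z (by simp [hA'eq]) hyz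
      have : G.dist y z ≤ G.dist y v + G.dist v z := hconn.dist_triangle
      have hyv : G.dist y v ≤ 1 := by
        rw [SimpleGraph.dist_comm]; exact SimpleGraph.dist_le hy.toWalk
      have hvz : G.dist v z ≤ 1 := SimpleGraph.dist_le hz.toWalk
      omega
    have hfin : (G.neighborSet v).Finite := by
      by_contra hinf
      have hinf : (G.neighborSet v).Infinite := hinf
      obtain ⟨A, hsub, hcard⟩ := hinf.exists_subset_card_eq (N 2 2 + 1)
      have := key A hsub
      omega
    refine ⟨hfin, ?_⟩
    rw [Set.ncard_eq_toFinset_card _ hfin]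
    exact key _ (by simp)
  · rintro ⟨P, hP⟩
    choose B hB hBc using fun v => ball_bound G hconn P hP v
    refine ⟨fun l k => k * (P + 1) ^ l, fun l k hl hk A hA => ?_⟩
    have main : ∀ k : ℕ, ∀ A : Finset α, k * (P + 1) ^ l ≤ A.card →
        ∃ A' ⊆ A, A'.card = k ∧
          ∀ y ∈ A', ∀ z ∈ A', y ≠ z → l < G.dist y z := by
      intro k
      induction k with
      | zero => exact fun A _ => ⟨∅, Finset.empty_subset _, rfl, by simp⟩
      | succ k ih =>
        intro A hA
        have hpos : 0 < A.card := by
          have : 0 < (P + 1) ^ l := Nat.pow_pos (by omega)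
          nlinarith
        obtain ⟨a, ha⟩ := Finset.card_pos.mp hpos
        set A₂ := A \ B a l with hA₂
        have hcard2 : k * (P + 1) ^ l ≤ A₂.card := by
          have h1 : A₂.card ≥ A.card - (B a l).card := by
            rw [hA₂]; exact le_card_sdiff _ _
          have := hBc a l
          have hsplit : (k + 1) * (P + 1) ^ l = k * (P + 1) ^ l + (P + 1) ^ l := by ring
          omega
        obtain ⟨A', hsub, hcA', hdA'⟩ := ih A₂ hcard2
        have haA' : a ∉ A' := by
          intro h
          have : a ∈ A₂ := hsub h
          rw [hA₂, Finset.mem_sdiff] at this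
          exact this.2 (hB a l a (by simp [(hconn a a).dist_eq_zero_iff.mpr rfl]))
        refine ⟨insert a A', ?_, by rw [Finset.card_insert_of_notMem haA', hcA'], ?_⟩
        · intro x hx
          rcases Finset.mem_insert.mp hx with h | h
          · exact h ▸ ha
          · exact (Finset.sdiff_subset (hsub h))
        · intro y hy z hz hyz
          have key : ∀ w ∈ A', l < G.dist a w := by
            intro w hw
            have : w ∈ A₂ := hsub hw
            rw [hA₂, Finset.mem_sdiff] at this
            by_contra hle
            push_neg at hle
            exact this.2 (hB a l w hle)
          rcases Finset.mem_insert.mp hy with rfl | hy'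
          · rcases Finset.mem_insert.mp hz with rfl | hz'
            · exact absurd rfl hyz
            · exact key z hz'
          · rcases Finset.mem_insert.mp hz with rfl | hz'
            · rw [SimpleGraph.dist_comm]; exact key y hy'
            · exact hdA' y hy' z hz' hyz
    exact main k A (le_of_lt hA)
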